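/- For inner functions u and v, the dual compressed shifts D_u and D_v are unitarily equivalent if and only if |u(0)| = |v(0)|. -/

import Mathlib

open MeasureTheory Complex AddCircle

noncomputable section

namespace Paper

/-- The period `2π`. -/
abbrev T : ℝ := 2 * Real.pi

instance : Fact (0 < T) := ⟨by positivity⟩

/-- Normalized Lebesgue (Haar) measure on the circle. -/
abbrev μ : Measure (AddCircle T) := haarAddCircle

/-- The space `L²(𝕋, dm)`. -/
abbrev L2 : Type := Lp ℂ 2 μ

lemma memLp_mul {u : AddCircle T → ℂ} (hm : AEStronglyMeasurable u μ)
    (hb : ∀ᵐ x ∂μ, ‖u x‖ ≤ 1) (f : L2) :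
    MemLp (fun x => u x * (f : AddCircle T → ℂ) x) 2 μ := by
  refine (Lp.memLp f).of_le (hm.mul (Lp.aestronglyMeasurable f)) ?_
  filter_upwards [hb] with x hx
  calc ‖u x * (f : AddCircle T → ℂ) x‖ = ‖u x‖ * ‖(f : AddCircle T → ℂ) x‖ := norm_mul _ _
    _ ≤ 1 * ‖(f : AddCircle T → ℂ) x‖ := by gcongr
    _ = ‖(f : AddCircle T → ℂ) x‖ := one_mul _

/-- Multiplication by a measurable function bounded by `1`, as a bounded operator on `L²`. -/
def mulCLM (u : AddCircle T → ℂ) (hm : AEStronglyMeasurable u μ)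
    (hb : ∀ᵐ x ∂μ, ‖u x‖ ≤ 1) : L2 →L[ℂ] L2 :=
  LinearMap.mkContinuous
    { toFun := fun f => (memLp_mul hm hb f).toLp _
      map_add' := fun f g => by
        show MemLp.toLp _ (memLp_mul hm hb (f + g)) = _
        have h : (fun x => u x * ((f + g : L2) : AddCircle T → ℂ) x)
            =ᵐ[μ] (fun x => u x * (f : AddCircle T → ℂ) x)
              + (fun x => u x * (g : AddCircle T → ℂ) x) := by
          filter_upwards [Lp.coeFn_add f g] with x hx
          simp only [Pi.add_apply, hx, mul_add]
        rw [MemLp.toLp_congr (memLp_mul hm hb (f + g))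
          ((memLp_mul hm hb f).add (memLp_mul hm hb g)) h, MemLp.toLp_add]
      map_smul' := fun c f => by
        have h : (fun x => u x * ((c • f : L2) : AddCircle T → ℂ) x)
            =ᵐ[μ] c • (fun x => u x * (f : AddCircle T → ℂ) x) := by
          filter_upwards [Lp.coeFn_smul c f] with x hx
          simp only [Pi.smul_apply, hx, smul_eq_mul]
          ring
        simp only [RingHom.id_apply]
        rw [MemLp.toLp_congr (memLp_mul hm hb (c • f))
          ((memLp_mul hm hb f).const_smul c) h, MemLp.toLp_const_smul] }
    1
    (fun f => by
      simp only [LinearMap.coe_mk, AddHom.coe_mk, one_mul]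
      rw [Lp.norm_toLp]
      have h1 : eLpNorm (fun x => u x * (f : AddCircle T → ℂ) x) 2 μ
          ≤ eLpNorm (f : AddCircle T → ℂ) 2 μ := by
        refine eLpNorm_mono_ae ?_
        filter_upwards [hb] with x hx
        calc ‖u x * (f : AddCircle T → ℂ) x‖
            = ‖u x‖ * ‖(f : AddCircle T → ℂ) x‖ := norm_mul _ _
          _ ≤ 1 * ‖(f : AddCircle T → ℂ) x‖ := by gcongr
          _ = ‖(f : AddCircle T → ℂ) x‖ := one_mul _
      calc (eLpNorm (fun x => u x * (f : AddCircle T → ℂ) x) 2 μ).toReal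
          ≤ (eLpNorm (f : AddCircle T → ℂ) 2 μ).toReal :=
            ENNReal.toReal_mono (Lp.eLpNorm_ne_top f) h1
        _ = ‖f‖ := (Lp.norm_def f).symm)

lemma memLp_conj (f : L2) :
    MemLp (fun x => (starRingEnd ℂ) ((f : AddCircle T → ℂ) x)) 2 μ := by
  refine (Lp.memLp f).of_le ?_ ?_
  · exact Complex.continuous_conj.comp_aestronglyMeasurable (Lp.aestronglyMeasurable f)
  · filter_upwards with x
    simp

/-- Complex conjugation on `L²`. -/
def conjL2 (f : L2) : L2 := (memLp_conj f).toLp _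

/-- The independent variable `z = e^{iθ}` as a function on the circle. -/
def zfun : AddCircle T → ℂ := fun x => fourier 1 x

lemma zfun_meas : AEStronglyMeasurable zfun μ :=
  ((map_continuous (fourier (T := T) 1)).aestronglyMeasurable)

lemma zfun_norm : ∀ᵐ x ∂μ, ‖zfun x‖ ≤ 1 := by
  filter_upwards with x
  simp [zfun, Circle.norm_coe]

/-- Multiplication by `z` (the bilateral shift `M` on `L²`). -/
def Mz : L2 →L[ℂ] L2 := mulCLM zfun zfun_meas zfun_norm

/-- Multiplication by `conj z`. -/
def Mzbar : L2 →L[ℂ] L2 :=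
  mulCLM (fun x => (starRingEnd ℂ) (zfun x))
    (Complex.continuous_conj.comp_aestronglyMeasurable zfun_meas)
    (by filter_upwards with x; simp [zfun, Circle.norm_coe])

/-- The Hardy space `H² = {f ∈ L² : f̂(n) = 0 for all n < 0}`. -/
def H2 : Submodule ℂ L2 where
  carrier := {f | ∀ n : ℤ, n < 0 → fourierBasis.repr f n = 0}
  add_mem' := by
    intro f g hf hg n hn
    simp [map_add, hf n hn, hg n hn]
  zero_mem' := by intro n hn; simp
  smul_mem' := by
    intro c f hf n hn
    simp [_root_.map_smul, hf n hn]

lemma continuous_coeff (n : ℤ) :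
    Continuous fun f : L2 => fourierBasis.repr f n := by
  rw [Metric.continuous_iff]
  intro f ε hε
  refine ⟨ε, hε, fun g hg => ?_⟩
  have h1 : fourierBasis.repr g n - fourierBasis.repr f n = fourierBasis.repr (g - f) n := by
    simp [map_sub]
  have h2 : ‖fourierBasis.repr (g - f) n‖ ≤ ‖fourierBasis.repr (g - f)‖ :=
    lp.norm_apply_le_norm (by norm_num) _ n
  have h3 : ‖fourierBasis.repr (g - f)‖ = ‖g - f‖ :=
    fourierBasis.repr.norm_map _
  calc dist (fourierBasis.repr g n) (fourierBasis.repr f n)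
      = ‖fourierBasis.repr (g - f) n‖ := by rw [dist_eq_norm, h1]
    _ ≤ ‖g - f‖ := by rw [← h3]; exact h2
    _ = dist g f := (dist_eq_norm g f).symm
    _ < ε := hg

lemma H2_isClosed : IsClosed (H2 : Set L2) := by
  have : (H2 : Set L2) =
      ⋂ n ∈ {m : ℤ | m < 0}, {f : L2 | fourierBasis.repr f n = 0} := by
    ext f
    simp only [Set.mem_iInter, Set.mem_setOf_eq]
    rfl
  rw [this]
  exact isClosed_biInter fun n _ => isClosed_eq (continuous_coeff n) continuous_const

instance : CompleteSpace H2 := H2_isClosed.completeSpace_coe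

/-- The Riesz projection `P⁺` of `L²` onto `H²`. -/
def Pp : L2 →L[ℂ] L2 := H2.subtypeL ∘L H2.orthogonalProjectionOnto

/-- The projection `P⁻ = I − P⁺` of `L²` onto `conj(H²₀)`. -/
def Pm : L2 →L[ℂ] L2 := ContinuousLinearMap.id ℂ L2 - Pp

/-- `conj(H²₀) = {f ∈ L² : f̂(n) = 0 for all n ≥ 0}`, the orthogonal complement of `H²`. -/
def Hm : Submodule ℂ L2 where
  carrier := {f | ∀ n : ℤ, 0 ≤ n → fourierBasis.repr f n = 0}
  add_mem' := by
    intro f g hf hg n hn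
    simp [map_add, hf n hn, hg n hn]
  zero_mem' := by intro n hn; simp
  smul_mem' := by
    intro c f hf n hn
    simp [_root_.map_smul, hf n hn]

/-- The constant function `1` as an element of `L²`. -/
def oneL2 : L2 := (memLp_const (1 : ℂ)).toLp _

/-- An inner function: a bounded measurable unimodular function on the circle whose
negative Fourier coefficients vanish. -/
structure InnerData where
  u : AddCircle T → ℂ
  meas : AEStronglyMeasurable u μ
  unim : ∀ᵐ x ∂μ, ‖u x‖ = 1
  anal : ∀ n : ℤ, n < 0 → fourierCoeff u n = 0

namespace InnerData

variable (U : InnerData)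

lemma bd : ∀ᵐ x ∂μ, ‖U.u x‖ ≤ 1 := by
  filter_upwards [U.unim] with x hx
  rw [hx]

/-- Multiplication by `u`: the operator `M_u` on `L²`. -/
def M : L2 →L[ℂ] L2 := mulCLM U.u U.meas U.bd

/-- Multiplication by `conj u`: the operator `M_{conj u}` on `L²`. -/
def Mc : L2 →L[ℂ] L2 :=
  mulCLM (fun x => (starRingEnd ℂ) (U.u x))
    (Complex.continuous_conj.comp_aestronglyMeasurable U.meas)
    (by filter_upwards [U.bd] with x hx; simpa using hx)

/-- `u` as an element of `L²`. -/
def toL2 : L2 :=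
  (memLp_top_of_bound U.meas 1 U.bd |>.mono_exponent le_top).toLp _

/-- The value `u(0)` of (the analytic extension of) `u` at the origin, i.e. the mean of `u`. -/
def a0 : ℂ := fourierCoeff U.u 0

/-- The subspace `uH²`. -/
def uH2 : Submodule ℂ L2 := Submodule.map (U.M : L2 →ₗ[ℂ] L2) H2

/-- The model space `K_u = H² ∩ (uH²)ᗮ`. -/
def Ku : Submodule ℂ L2 := H2 ⊓ (U.uH2)ᗮ

lemma Ku_isClosed : IsClosed (U.Ku : Set L2) := by
  have : (U.Ku : Set L2) = (H2 : Set L2) ∩ ((U.uH2)ᗮ : Set L2) := rfl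
  rw [this]
  exact H2_isClosed.inter (U.uH2).isClosed_orthogonal

instance : CompleteSpace U.Ku := U.Ku_isClosed.completeSpace_coe

/-- `K_u^⊥`, the orthogonal complement of the model space in `L²`. -/
def KP : Submodule ℂ L2 := (U.Ku)ᗮ

instance : CompleteSpace U.KP := (U.Ku).isClosed_orthogonal.completeSpace_coe

/-- The orthogonal projection `P_u : L² → K_u` (viewed as an operator on `L²`). -/
def Pu : L2 →L[ℂ] L2 := (U.Ku).subtypeL ∘L (U.Ku).orthogonalProjectionOnto

/-- The dual of the compressed shift: `D_u = (I − P_u) M_z |_{K_u^⊥}`. -/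
def Du : U.KP →L[ℂ] U.KP :=
  (U.KP).orthogonalProjectionOnto ∘L Mz ∘L (U.KP).subtypeL

/-- The conjugation `C_u f = u · conj(z f)` on `L²`. -/
def C (f : L2) : L2 := U.M (conjL2 (Mz f))

/-- The reproducing kernel of `K_u` at `0`: `k₀ᵘ = 1 − conj(u(0))·u`. -/
def k0 : L2 := oneL2 - (starRingEnd ℂ) U.a0 • U.toL2

/-- The similarity `V_u = P⁻ + (conj u/conj u(0)) P⁺` of the paper. -/
def V : L2 →L[ℂ] L2 := Pm + ((starRingEnd ℂ) U.a0)⁻¹ • (U.Mc ∘L Pp)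

/-- The inverse similarity `V_u⁻¹ = P⁻ + conj(u(0)) u P⁺`. -/
def Vinv : L2 →L[ℂ] L2 := Pm + (starRingEnd ℂ) U.a0 • (U.M ∘L Pp)

end InnerData

lemma Mz_mem_H2 {f : L2} (hf : f ∈ H2) : Mz f ∈ H2 := by
  intro n hn
  rw [fourierBasis_repr]
  have hcoe : (Mz f : AddCircle T → ℂ) =ᵐ[μ] fun x => zfun x * (f : AddCircle T → ℂ) x :=
    MemLp.coeFn_toLp (memLp_mul zfun_meas zfun_norm f)
  have h1 : fourierCoeff (Mz f : AddCircle T → ℂ) n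
      = fourierCoeff (f : AddCircle T → ℂ) (n - 1) := by
    unfold fourierCoeff
    rw [integral_congr_ae (by filter_upwards [hcoe] with x hx; rw [hx])]
    refine integral_congr_ae ?_
    filter_upwards with x
    have : fourier (-n) x * zfun x = fourier (-(n - 1)) x := by
      unfold zfun
      rw [show (-(n - 1) : ℤ) = -n + 1 by ring, fourier_add]
    simp only [smul_eq_mul]
    calc fourier (-n) x * (zfun x * (f : AddCircle T → ℂ) x)
        = (fourier (-n) x * zfun x) * (f : AddCircle T → ℂ) x := by ring
      _ = fourier (-(n - 1)) x * (f : AddCircle T → ℂ) x := by rw [this]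
  rw [h1]
  have := hf (n - 1) (by omega)
  rwa [fourierBasis_repr] at this

/-- The unilateral shift `S` on `H²`. -/
def Shift : H2 →L[ℂ] H2 :=
  (Mz ∘L H2.subtypeL).codRestrict H2 (fun x => Mz_mem_H2 x.2)

/-!
`K_u^⊥` is the orthogonal sum `(H²)^⊥ ⊕ uH²`, and on it `D_u x = z x - x̂(-1) k₀`, where
`k₀ = 1 - conj(u(0)) u ∈ K_u`. As `k₀ ⊥ D_u x` and `‖k₀‖² = 1 - |u(0)|²`, this gives
`‖D_u x‖² = ‖x‖² - (1 - |u(0)|²) |x̂(-1)|²`, so `|u(0)|` is the minimum of `‖D_u x‖` over unit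
vectors (attained at `z̄`), a unitary invariant.

Conversely, in the coordinates `x = g + u h` (`g ∈ (H²)^⊥`, `h ∈ H²`) the operator reads
`D_u (g + u h) = (z g - ĝ(-1)) + u (z h + ĝ(-1) conj(u(0)))`; hence if `λ conj(u(0)) = conj(v(0))`
with `|λ| = 1`, the unitary `g + u h ↦ g + λ v h` from `K_u^⊥` onto `K_v^⊥` intertwines `D_u`
and `D_v`.
-/

end Paper

open scoped InnerProductSpace

section Hilbert

variable {ι 𝕜 E : Type*} [RCLike 𝕜] [NormedAddCommGroup E] [InnerProductSpace 𝕜 E]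

theorem HilbertBasis.mem_of_repr_eq_zero (b : HilbertBasis ι 𝕜 E) {S : Submodule 𝕜 E}
    (hS : IsClosed (S : Set E)) {s : Set ι} (hb : ∀ i ∈ s, b i ∈ S) {x : E}
    (hx : ∀ i ∉ s, b.repr x i = 0) : x ∈ S := by
  have hsum (t : Finset ι) : ∑ i ∈ t, b.repr x i • b i ∈ S := by
    refine S.sum_mem fun i _ => ?_
    by_cases hi : i ∈ s
    · exact S.smul_mem _ (hb i hi)
    · simp [hx i hi]
  exact hS.mem_of_tendsto (b.hasSum_repr x) (Filter.Eventually.of_forall hsum)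

theorem HilbertBasis.inner_eq_zero_of_repr (b : HilbertBasis ι 𝕜 E) {x y : E}
    (h : ∀ i, b.repr x i = 0 ∨ b.repr y i = 0) : ⟪x, y⟫_𝕜 = 0 := by
  rw [← b.repr.inner_map_map, lp.inner_eq_tsum]
  refine (tsum_congr fun i => ?_).trans tsum_zero
  rcases h i with h | h <;> simp [h]

theorem Submodule.orthogonal_inf_orthogonal {K₁ K₂ : Submodule 𝕜 E} (h : K₁ ≤ K₂)
    [K₁.HasOrthogonalProjection] [K₂.HasOrthogonalProjection] :
    (K₂ ⊓ K₁ᗮ)ᗮ = K₂ᗮ ⊔ K₁ := by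
  have hK₂ : K₂ᗮ ≤ (K₂ ⊓ K₁ᗮ)ᗮ := orthogonal_le inf_le_left
  have hK₁ : K₁ ≤ (K₂ ⊓ K₁ᗮ)ᗮ := K₁.le_orthogonal_orthogonal.trans (orthogonal_le inf_le_right)
  have hK₂_inf : K₂ ⊓ (K₂ ⊓ K₁ᗮ)ᗮ = K₁ := calc
    K₂ ⊓ (K₂ ⊓ K₁ᗮ)ᗮ = (K₁ ⊔ K₁ᗮ ⊓ K₂) ⊓ (K₂ ⊓ K₁ᗮ)ᗮ := by
      rw [sup_orthogonal_inf_of_hasOrthogonalProjection h]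
    _ = K₁ := by
      rw [sup_inf_assoc_of_le _ hK₁, inf_comm K₁ᗮ, inf_orthogonal_eq_bot, sup_bot_eq]
  calc (K₂ ⊓ K₁ᗮ)ᗮ = (K₂ᗮ ⊔ K₂) ⊓ (K₂ ⊓ K₁ᗮ)ᗮ := by
        rw [sup_comm, sup_orthogonal_of_hasOrthogonalProjection, top_inf_eq]
    _ = K₂ᗮ ⊔ K₁ := by rw [sup_inf_assoc_of_le _ hK₂, hK₂_inf]

theorem norm_add_sq_eq_of_inner_eq_zero {x y : E} (h : ⟪x, y⟫_𝕜 = 0) :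
    ‖x + y‖ ^ 2 = ‖x‖ ^ 2 + ‖y‖ ^ 2 := by
  simp [norm_add_sq (𝕜 := 𝕜), h]

end Hilbert

theorem LinearIsometryEquiv.image_norm_sphere_of_intertwines {𝕜 E F : Type*} [NormedField 𝕜]
    [SeminormedAddCommGroup E] [SeminormedAddCommGroup F] [NormedSpace 𝕜 E] [NormedSpace 𝕜 F]
    (Z : E ≃ₗᵢ[𝕜] F) {A : E → E} {B : F → F} (h : ∀ x, Z (A x) = B (Z x)) :
    (fun y => ‖B y‖) '' Metric.sphere 0 1 = (fun x => ‖A x‖) '' Metric.sphere 0 1 := by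
  rw [← map_zero Z, ← Z.image_sphere, Set.image_image]
  simp_rw [← h, Z.norm_map]

theorem exists_norm_eq_one_mul_eq {𝕜 : Type*} [NormedDivisionRing 𝕜] {a b : 𝕜}
    (h : ‖a‖ = ‖b‖) : ∃ l : 𝕜, ‖l‖ = 1 ∧ l * a = b := by
  rcases eq_or_ne a 0 with rfl | ha
  · exact ⟨1, norm_one, by simpa [eq_comm] using h⟩
  · exact ⟨b / a, by rw [norm_div, ← h, div_self (norm_ne_zero_iff.2 ha)], div_mul_cancel₀ b ha⟩

namespace Paper

lemma coeFn_mulCLM {u : AddCircle T → ℂ} (hm : AEStronglyMeasurable u μ)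
    (hb : ∀ᵐ x ∂μ, ‖u x‖ ≤ 1) (f : L2) :
    (mulCLM u hm hb f : AddCircle T → ℂ) =ᵐ[μ] fun x => u x * (f : AddCircle T → ℂ) x :=
  MemLp.coeFn_toLp (memLp_mul hm hb f)

lemma norm_mulCLM {u : AddCircle T → ℂ} (hm : AEStronglyMeasurable u μ)
    (hb : ∀ᵐ x ∂μ, ‖u x‖ ≤ 1) (hu : ∀ᵐ x ∂μ, ‖u x‖ = 1) (f : L2) :
    ‖mulCLM u hm hb f‖ = ‖f‖ := by
  rw [Lp.norm_def, Lp.norm_def]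
  congr 1
  refine eLpNorm_congr_norm_ae ?_
  filter_upwards [coeFn_mulCLM hm hb f, hu] with x hx hux
  rw [hx, norm_mul, hux, one_mul]

lemma mulCLM_comm {u v : AddCircle T → ℂ} (hmu : AEStronglyMeasurable u μ)
    (hbu : ∀ᵐ x ∂μ, ‖u x‖ ≤ 1) (hmv : AEStronglyMeasurable v μ) (hbv : ∀ᵐ x ∂μ, ‖v x‖ ≤ 1)
    (f : L2) : mulCLM u hmu hbu (mulCLM v hmv hbv f) = mulCLM v hmv hbv (mulCLM u hmu hbu f) := by
  refine Lp.ext ?_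
  filter_upwards [coeFn_mulCLM hmu hbu (mulCLM v hmv hbv f), coeFn_mulCLM hmv hbv f,
    coeFn_mulCLM hmv hbv (mulCLM u hmu hbu f), coeFn_mulCLM hmu hbu f] with x h₁ h₂ h₃ h₄
  rw [h₁, h₂, h₃, h₄, mul_left_comm]

lemma fourierCoeff_fourier_mul (k n : ℤ) (f : AddCircle T → ℂ) :
    fourierCoeff (fun x => fourier k x * f x) n = fourierCoeff f (n - k) := by
  simp only [fourierCoeff, smul_eq_mul, ← mul_assoc, ← fourier_add]
  ring_nf

lemma repr_eq_fourierCoeff_of_ae_eq {f : L2} {g : AddCircle T → ℂ}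
    (h : (f : AddCircle T → ℂ) =ᵐ[μ] g) (n : ℤ) : fourierBasis.repr f n = fourierCoeff g n := by
  rw [fourierBasis_repr]
  exact integral_congr_ae (by filter_upwards [h] with x hx; rw [hx])

lemma coeFn_Mz (f : L2) : (Mz f : AddCircle T → ℂ) =ᵐ[μ] fun x => zfun x * (f : AddCircle T → ℂ) x :=
  coeFn_mulCLM zfun_meas zfun_norm f

lemma repr_Mz (f : L2) (n : ℤ) : fourierBasis.repr (Mz f) n = fourierBasis.repr f (n - 1) := by
  rw [repr_eq_fourierCoeff_of_ae_eq (coeFn_Mz f), fourierBasis_repr]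
  exact fourierCoeff_fourier_mul 1 n _

lemma norm_Mz (f : L2) : ‖Mz f‖ = ‖f‖ :=
  norm_mulCLM _ _ (Filter.Eventually.of_forall fun x => by simp [zfun, Circle.norm_coe]) f

lemma repr_fourierBasis (n m : ℤ) :
    fourierBasis.repr (fourierBasis (T := T) n) m = if m = n then 1 else 0 := by
  classical
  rw [fourierBasis.repr_self, lp.single_apply, Pi.single_apply]

lemma oneL2_eq_fourierBasis : oneL2 = fourierBasis (T := T) 0 := by
  refine Lp.ext ?_
  filter_upwards [MemLp.coeFn_toLp (memLp_const (1 : ℂ)), coe_fourierBasis (T := T) ▸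
    coeFn_fourierLp 2 0] with x h₁ h₂
  rw [h₂, fourier_zero]
  exact h₁

lemma repr_oneL2 (n : ℤ) : fourierBasis.repr oneL2 n = if n = 0 then 1 else 0 := by
  rw [oneL2_eq_fourierBasis, repr_fourierBasis]

lemma norm_oneL2 : ‖oneL2‖ = 1 := by
  rw [oneL2_eq_fourierBasis]
  exact fourierBasis.orthonormal.1 0

lemma norm_repr_le (f : L2) (n : ℤ) : ‖fourierBasis.repr f n‖ ≤ ‖f‖ :=
  (lp.norm_apply_le_norm two_ne_zero _ n).trans_eq (fourierBasis.repr.norm_map f)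

lemma fourierBasis_mem_H2 {n : ℤ} (hn : 0 ≤ n) : (fourierBasis (T := T) n : L2) ∈ H2 :=
  fun m hm => by rw [repr_fourierBasis, if_neg (by omega)]

lemma oneL2_mem_H2 : oneL2 ∈ H2 := oneL2_eq_fourierBasis ▸ fourierBasis_mem_H2 le_rfl

lemma H2_le_of_fourierBasis_mem {S : Submodule ℂ L2} (hS : IsClosed (S : Set L2))
    (h : ∀ n : ℤ, 0 ≤ n → (fourierBasis (T := T) n : L2) ∈ S) : H2 ≤ S :=
  fun _ hf => fourierBasis.mem_of_repr_eq_zero hS (s := {n | 0 ≤ n}) h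
    fun n hn => hf n (not_le.1 hn)

lemma orthogonal_H2 : H2ᗮ = Hm := by
  ext f
  constructor
  · intro hf n hn
    rw [fourierBasis.repr_apply_apply]
    exact H2.inner_right_of_mem_orthogonal (fourierBasis_mem_H2 hn) hf
  · intro hf g hg
    refine fourierBasis.inner_eq_zero_of_repr fun n => ?_
    rcases lt_or_ge n 0 with hn | hn
    · exact .inl (hg n hn)
    · exact .inr (hf n hn)

lemma fourierBasis_neg_one_mem_orthogonal_H2 : (fourierBasis (T := T) (-1) : L2) ∈ H2ᗮ := by
  rw [orthogonal_H2]
  intro n hn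
  rw [repr_fourierBasis, if_neg (by omega)]

lemma Mz_sub_mem_orthogonal_H2 {g : L2} (hg : g ∈ H2ᗮ) :
    Mz g - fourierBasis.repr g (-1) • oneL2 ∈ H2ᗮ := by
  rw [orthogonal_H2] at hg ⊢
  intro n hn
  rw [map_sub, map_smul, lp.coeFn_sub, Pi.sub_apply, lp.coeFn_smul, Pi.smul_apply, repr_Mz,
    repr_oneL2]
  rcases hn.eq_or_lt with rfl | hn
  · simp
  · rw [hg (n - 1) (by omega), if_neg hn.ne', smul_zero, sub_zero]

lemma starProjection_H2_add {g h : L2} (hg : g ∈ H2ᗮ) (hh : h ∈ H2) :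
    H2.starProjection (g + h) = h :=
  Submodule.eq_starProjection_of_mem_orthogonal' hh hg (add_comm g h)

namespace InnerData

variable (U : InnerData)

lemma coeFn_M (f : L2) :
    (U.M f : AddCircle T → ℂ) =ᵐ[μ] fun x => U.u x * (f : AddCircle T → ℂ) x :=
  coeFn_mulCLM _ _ f

lemma coeFn_Mc (f : L2) :
    (U.Mc f : AddCircle T → ℂ) =ᵐ[μ] fun x => (starRingEnd ℂ) (U.u x) * (f : AddCircle T → ℂ) x :=
  coeFn_mulCLM _ _ f

lemma Mc_M (f : L2) : U.Mc (U.M f) = f := by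
  refine Lp.ext ?_
  filter_upwards [U.coeFn_Mc (U.M f), U.coeFn_M f, U.unim] with x h₁ h₂ h₃
  rw [h₁, h₂, ← mul_assoc, Complex.conj_mul', h₃]
  simp

lemma norm_M (f : L2) : ‖U.M f‖ = ‖f‖ := norm_mulCLM _ _ U.unim f

def Mₗᵢ : L2 →ₗᵢ[ℂ] L2 := ⟨(U.M : L2 →ₗ[ℂ] L2), U.norm_M⟩

lemma inner_M_M (f g : L2) : ⟪U.M f, U.M g⟫_ℂ = ⟪f, g⟫_ℂ := U.Mₗᵢ.inner_map_map f g

lemma M_Mz (f : L2) : U.M (Mz f) = Mz (U.M f) := mulCLM_comm _ _ _ _ f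

lemma toL2_eq_M_oneL2 : U.toL2 = U.M oneL2 := by
  refine Lp.ext ?_
  filter_upwards [MemLp.coeFn_toLp (memLp_top_of_bound U.meas 1 U.bd |>.mono_exponent le_top),
    U.coeFn_M oneL2, MemLp.coeFn_toLp (memLp_const (1 : ℂ))] with x h₁ h₂ h₃
  rw [h₂]
  exact h₁.trans (by rw [show ((oneL2 : L2) : AddCircle T → ℂ) x = 1 from h₃, mul_one])

lemma norm_toL2 : ‖U.toL2‖ = 1 := by
  rw [toL2_eq_M_oneL2, norm_M, norm_oneL2]

lemma repr_M_fourierBasis (n m : ℤ) :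
    fourierBasis.repr (U.M (fourierBasis n)) m = fourierCoeff U.u (m - n) := by
  have h : (U.M (fourierBasis n) : AddCircle T → ℂ) =ᵐ[μ] fun x => fourier n x * U.u x := by
    filter_upwards [U.coeFn_M (fourierBasis n),
      coe_fourierBasis (T := T) ▸ coeFn_fourierLp 2 n] with x h₁ h₂
    rw [h₁, h₂, mul_comm]
  rw [repr_eq_fourierCoeff_of_ae_eq h, fourierCoeff_fourier_mul]

lemma uH2_le_H2 : U.uH2 ≤ H2 := by
  rw [uH2, Submodule.map_le_iff_le_comap]
  refine H2_le_of_fourierBasis_mem (H2_isClosed.preimage U.M.continuous) fun n hn m hm =>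
    (U.repr_M_fourierBasis n m).trans (U.anal _ (by omega))

lemma M_mem_uH2 {h : L2} (hh : h ∈ H2) : U.M h ∈ U.uH2 := ⟨h, hh, rfl⟩

lemma M_mem_H2 {h : L2} (hh : h ∈ H2) : U.M h ∈ H2 := U.uH2_le_H2 (U.M_mem_uH2 hh)

lemma uH2_isClosed : IsClosed (U.uH2 : Set L2) := by
  rw [uH2, Submodule.map_coe]
  exact U.Mₗᵢ.isometry.isClosedEmbedding.isClosedMap _ H2_isClosed

instance : CompleteSpace U.uH2 := U.uH2_isClosed.completeSpace_coe

lemma KP_eq_sup : U.KP = H2ᗮ ⊔ U.uH2 := Submodule.orthogonal_inf_orthogonal U.uH2_le_H2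

lemma exists_add_M_eq {x : L2} (hx : x ∈ U.KP) : ∃ g ∈ H2ᗮ, ∃ h ∈ H2, g + U.M h = x := by
  rw [KP_eq_sup] at hx
  obtain ⟨g, hg, _, ⟨h, hh, rfl⟩, rfl⟩ := Submodule.mem_sup.1 hx
  exact ⟨g, hg, h, hh, rfl⟩

lemma add_M_mem_KP {g h : L2} (hg : g ∈ H2ᗮ) (hh : h ∈ H2) : g + U.M h ∈ U.KP := by
  rw [KP_eq_sup]
  exact Submodule.add_mem_sup hg (U.M_mem_uH2 hh)

lemma norm_add_M_sq {g h : L2} (hg : g ∈ H2ᗮ) (hh : h ∈ H2) :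
    ‖g + U.M h‖ ^ 2 = ‖g‖ ^ 2 + ‖h‖ ^ 2 := by
  rw [norm_add_sq_eq_of_inner_eq_zero (H2.inner_left_of_mem_orthogonal (U.M_mem_H2 hh) hg),
    U.norm_M]

lemma repr_add_M_neg_one (g : L2) {h : L2} (hh : h ∈ H2) :
    fourierBasis.repr (g + U.M h) (-1) = fourierBasis.repr g (-1) := by
  rw [map_add, lp.coeFn_add, Pi.add_apply, U.M_mem_H2 hh (-1) (by norm_num), add_zero]

lemma inner_k0_M_fourierBasis {n : ℤ} (hn : 0 ≤ n) :
    ⟪U.k0, U.M (fourierBasis n)⟫_ℂ = 0 := by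
  rw [k0, inner_sub_left, inner_smul_left, Complex.conj_conj, U.toL2_eq_M_oneL2, inner_M_M,
    oneL2_eq_fourierBasis, ← fourierBasis.repr_apply_apply, ← fourierBasis.repr_apply_apply,
    repr_M_fourierBasis, repr_fourierBasis]
  rcases hn.eq_or_lt with rfl | hn
  · simp [a0]
  · rw [U.anal _ (by omega), if_neg hn.ne, mul_zero, sub_zero]

lemma k0_mem_Ku : U.k0 ∈ U.Ku := by
  refine ⟨H2.sub_mem oneL2_mem_H2 (H2.smul_mem _ ?_), ?_⟩
  · rw [toL2_eq_M_oneL2]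
    exact U.M_mem_H2 oneL2_mem_H2
  · rintro _ ⟨h, hh, rfl⟩
    have hker : H2 ≤ LinearMap.ker ((innerSL ℂ U.k0 ∘L U.M : L2 →L[ℂ] ℂ) : L2 →ₗ[ℂ] ℂ) :=
      H2_le_of_fourierBasis_mem (ContinuousLinearMap.isClosed_ker _)
        fun n hn => U.inner_k0_M_fourierBasis hn
    rw [inner_eq_zero_symm]
    exact hker hh

lemma norm_k0_sq : ‖U.k0‖ ^ 2 = 1 - ‖U.a0‖ ^ 2 := by
  have horth : ⟪U.k0, (starRingEnd ℂ) U.a0 • U.toL2⟫_ℂ = 0 := by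
    rw [toL2_eq_M_oneL2]
    exact U.uH2.inner_left_of_mem_orthogonal (U.uH2.smul_mem _ (U.M_mem_uH2 oneL2_mem_H2))
      U.k0_mem_Ku.2
  have h := norm_add_sq_eq_of_inner_eq_zero horth
  rw [show U.k0 + (starRingEnd ℂ) U.a0 • U.toL2 = oneL2 from sub_add_cancel _ _, norm_smul, RCLike.norm_conj, U.norm_toL2, norm_oneL2] at h
  linarith

end InnerData

namespace InnerData

variable (U : InnerData)

lemma Mz_add_M_sub_smul_k0 (g h : L2) :
    Mz (g + U.M h) - fourierBasis.repr g (-1) • U.k0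
      = (Mz g - fourierBasis.repr g (-1) • oneL2)
        + U.M (Mz h + (fourierBasis.repr g (-1) * (starRingEnd ℂ) U.a0) • oneL2) := by
  rw [k0, U.toL2_eq_M_oneL2, map_add, map_add, U.M_Mz, map_smul, mul_smul]
  module

lemma Du_coe (x : U.KP) :
    (U.Du x : L2) = Mz x - fourierBasis.repr (x : L2) (-1) • U.k0 := by
  obtain ⟨g, hg, h, hh, hx⟩ := U.exists_add_M_eq x.2
  have hmem : Mz x - fourierBasis.repr (x : L2) (-1) • U.k0 ∈ U.KP := by
    rw [← hx, U.repr_add_M_neg_one g hh, Mz_add_M_sub_smul_k0]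
    exact U.add_M_mem_KP (Mz_sub_mem_orthogonal_H2 hg)
      (H2.add_mem (Mz_mem_H2 hh) (H2.smul_mem _ oneL2_mem_H2))
  exact (Submodule.eq_starProjection_of_mem_orthogonal' hmem
    (U.KPᗮ.smul_mem _ (U.Ku.le_orthogonal_orthogonal U.k0_mem_Ku)) (sub_add_cancel _ _).symm)

lemma Du_coe_of_eq_add_M {g h : L2} (hh : h ∈ H2) (x : U.KP) (hx : (x : L2) = g + U.M h) :
    (U.Du x : L2) = (Mz g - fourierBasis.repr g (-1) • oneL2)
        + U.M (Mz h + (fourierBasis.repr g (-1) * (starRingEnd ℂ) U.a0) • oneL2) := by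
  rw [Du_coe, hx, U.repr_add_M_neg_one g hh, Mz_add_M_sub_smul_k0]

lemma norm_Du_sq (x : U.KP) :
    ‖U.Du x‖ ^ 2 = ‖x‖ ^ 2 - (1 - ‖U.a0‖ ^ 2) * ‖fourierBasis.repr (x : L2) (-1)‖ ^ 2 := by
  set c := fourierBasis.repr (x : L2) (-1)
  have horth : ⟪(U.Du x : L2), c • U.k0⟫_ℂ = 0 :=
    U.Ku.inner_left_of_mem_orthogonal (U.Ku.smul_mem c U.k0_mem_Ku) (U.Du x).2
  have h := norm_add_sq_eq_of_inner_eq_zero horth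
  rw [show (U.Du x : L2) + c • U.k0 = Mz x by rw [Du_coe, sub_add_cancel], norm_Mz, norm_smul,
    mul_pow, norm_k0_sq] at h
  rw [Submodule.coe_norm, Submodule.coe_norm]
  linarith

lemma isLeast_norm_Du : IsLeast ((fun f => ‖U.Du f‖) '' Metric.sphere 0 1) ‖U.a0‖ := by
  have ha : ‖U.a0‖ ^ 2 ≤ 1 := by nlinarith [U.norm_k0_sq, sq_nonneg ‖U.k0‖]
  constructor
  · have he : (fourierBasis (T := T) (-1) : L2) ∈ U.KP :=
      U.KP_eq_sup ▸ Submodule.mem_sup_left fourierBasis_neg_one_mem_orthogonal_H2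
    have hnorm : ‖(⟨_, he⟩ : U.KP)‖ = 1 := fourierBasis.orthonormal.1 (-1)
    refine ⟨⟨_, he⟩, mem_sphere_zero_iff_norm.2 hnorm, ?_⟩
    have h := U.norm_Du_sq ⟨_, he⟩
    rw [hnorm, repr_fourierBasis, if_pos rfl, norm_one] at h
    exact (sq_eq_sq₀ (norm_nonneg _) (norm_nonneg _)).1 (by linarith)
  · rintro _ ⟨f, hf, rfl⟩
    have hf : ‖f‖ = 1 := mem_sphere_zero_iff_norm.1 hf
    have hc : ‖fourierBasis.repr (f : L2) (-1)‖ ^ 2 ≤ 1 :=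
      pow_le_one₀ (norm_nonneg _) (hf ▸ norm_repr_le _ _)
    have h := U.norm_Du_sq f
    rw [hf] at h
    refine (sq_le_sq₀ (norm_nonneg _) (norm_nonneg _)).1 ?_
    nlinarith [mul_nonneg (sub_nonneg.2 ha) (sub_nonneg.2 hc)]

end InnerData

def transfer (U V : InnerData) (l : ℂ) : L2 →L[ℂ] L2 := Pm + l • (V.M ∘L U.Mc ∘L Pp)

section Transfer

variable {U V : InnerData} {l : ℂ}

lemma transfer_add_M {g h : L2} (hg : g ∈ H2ᗮ) (hh : h ∈ H2) :
    transfer U V l (g + U.M h) = g + V.M (l • h) := by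
  have hP : Pp (g + U.M h) = U.M h := starProjection_H2_add hg (U.M_mem_H2 hh)
  simp only [transfer, Pm, _root_.add_apply, _root_.sub_apply, _root_.smul_apply,
    ContinuousLinearMap.id_apply, ContinuousLinearMap.comp_apply, hP, U.Mc_M, map_smul, add_sub_cancel_right]

lemma transfer_mem_KP {x : L2} (hx : x ∈ U.KP) : transfer U V l x ∈ V.KP := by
  obtain ⟨g, hg, h, hh, rfl⟩ := U.exists_add_M_eq hx
  rw [transfer_add_M hg hh]
  exact V.add_M_mem_KP hg (H2.smul_mem l hh)

lemma norm_transfer (hl : ‖l‖ = 1) {x : L2} (hx : x ∈ U.KP) :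
    ‖transfer U V l x‖ = ‖x‖ := by
  obtain ⟨g, hg, h, hh, rfl⟩ := U.exists_add_M_eq hx
  rw [transfer_add_M hg hh, ← sq_eq_sq₀ (norm_nonneg _) (norm_nonneg _),
    V.norm_add_M_sq hg (H2.smul_mem l hh), U.norm_add_M_sq hg hh, norm_smul, hl, one_mul]

lemma exists_transfer_eq (hl : ‖l‖ = 1) {y : L2} (hy : y ∈ V.KP) :
    ∃ x ∈ U.KP, transfer U V l x = y := by
  obtain ⟨g, hg, h, hh, rfl⟩ := V.exists_add_M_eq hy
  have hl₀ : l ≠ 0 := norm_ne_zero_iff.1 (hl ▸ one_ne_zero)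
  refine ⟨g + U.M (l⁻¹ • h), U.add_M_mem_KP hg (H2.smul_mem _ hh), ?_⟩
  rw [transfer_add_M hg (H2.smul_mem _ hh), smul_inv_smul₀ hl₀]

variable (U V) in
def transferₗᵢ (hl : ‖l‖ = 1) : U.KP →ₗᵢ[ℂ] V.KP where
  toLinearMap := ((transfer U V l : L2 →ₗ[ℂ] L2).domRestrict U.KP).codRestrict V.KP
    fun x => transfer_mem_KP x.2
  norm_map' x := norm_transfer hl x.2

variable (U V) in
def transferEquiv (hl : ‖l‖ = 1) : U.KP ≃ₗᵢ[ℂ] V.KP :=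
  LinearIsometryEquiv.ofSurjective (transferₗᵢ U V hl) fun y => by
    obtain ⟨x, hx, hxy⟩ := exists_transfer_eq hl y.2
    exact ⟨⟨x, hx⟩, Subtype.ext hxy⟩

lemma transferEquiv_Du (hl : ‖l‖ = 1)
    (hlu : l * (starRingEnd ℂ) U.a0 = (starRingEnd ℂ) V.a0) (f : U.KP) :
    transferEquiv U V hl (U.Du f) = V.Du (transferEquiv U V hl f) := by
  obtain ⟨g, hg, h, hh, hf⟩ := U.exists_add_M_eq f.2
  have hZf : (transferEquiv U V hl f : L2) = g + V.M (l • h) := by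
    rw [← transfer_add_M hg hh, hf]
    rfl
  ext1
  change transfer U V l (U.Du f) = _
  rw [U.Du_coe_of_eq_add_M hh f hf.symm, V.Du_coe_of_eq_add_M (H2.smul_mem l hh) _ hZf,
    transfer_add_M (Mz_sub_mem_orthogonal_H2 hg)
      (H2.add_mem (Mz_mem_H2 hh) (H2.smul_mem _ oneL2_mem_H2)),
    smul_add, map_smul, smul_smul, mul_left_comm, hlu]

end Transfer

/-- `D_u` and `D_v` are unitarily equivalent iff `|u(0)| = |v(0)|`. -/
theorem Du_unitary_equiv_iff (U V : InnerData) :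
    (∃ Z : U.KP ≃ₗᵢ[ℂ] V.KP, ∀ f : U.KP, Z (U.Du f) = V.Du (Z f)) ↔
      ‖U.a0‖ = ‖V.a0‖ := by
  constructor
  · rintro ⟨Z, hZ⟩
    have hV := V.isLeast_norm_Du
    rw [Z.image_norm_sphere_of_intertwines hZ] at hV
    exact U.isLeast_norm_Du.unique hV
  · intro h
    obtain ⟨l, hl, hlu⟩ := exists_norm_eq_one_mul_eq
      (a := (starRingEnd ℂ) U.a0) (b := (starRingEnd ℂ) V.a0) (by simpa using h)
    exact ⟨transferEquiv U V hl, transferEquiv_Du hl hlu⟩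

end Paper
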